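/- Let R be a half-open cube in ℝ^d and E ⊆ ℝ^d a nonempty set whose closure has Lebesgue measure zero. Let 𝒟(R,E) be the family of dyadic subcubes of R intersecting E, and ℱ(R,E) the family of maximal dyadic subcubes Q' of R with Q' ∩ E = ∅ but πQ' ∩ E ≠ ∅ (where πQ' is the dyadic parent). Then ∑_{Q ∈ 𝒟(R,E)} |Q| = ∑_{Q' ∈ ℱ(R,E)} |Q'| · log₂(ℓ(R)/ℓ(Q')), where |·| denotes Lebesgue measure and ℓ(·) side length. -/

import Mathlib

open MeasureTheory Metric

/-- A half-open axis-parallel cube in `ℝ^d`: `[a₁, a₁+l) × ⋯ × [a_d, a_d+l)`. -/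
structure Cube (d : ℕ) where
  a : Fin d → ℝ
  l : ℝ
  l_pos : 0 < l

/-- The underlying point set of a cube. -/
def Cube.set {d : ℕ} (Q : Cube d) : Set (EuclideanSpace ℝ (Fin d)) :=
  {x | ∀ i, Q.a i ≤ x i ∧ x i < Q.a i + Q.l}

/-- `Q` is a dyadic subcube of `R`: a member of `𝒟_j(R)` for some `j ≥ 0`. -/
def IsDyadicSubcube {d : ℕ} (R Q : Cube d) : Prop :=
  ∃ j : ℕ, ∃ k : Fin d → ℕ, (∀ i, k i < 2 ^ j) ∧ Q.l = R.l / 2 ^ j ∧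
    ∀ i, Q.a i = R.a i + (k i : ℝ) * (R.l / 2 ^ j)

/-- `Q' ∈ ℱ(R,E)`: a maximal dyadic subcube of `R` avoiding `E`, i.e.
`Q' ∩ E = ∅` and its dyadic parent `πQ'` meets `E`. -/
def IsMaxEmpty {d : ℕ} (R : Cube d) (E : Set (EuclideanSpace ℝ (Fin d))) (Q' : Cube d) : Prop :=
  IsDyadicSubcube R Q' ∧ Q'.set ∩ E = ∅ ∧
    ∃ P : Cube d, IsDyadicSubcube R P ∧ P.l = 2 * Q'.l ∧ Q'.set ⊆ P.set ∧ (P.set ∩ E).Nonempty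

/-- `M = M(R)`: a largest dyadic subcube of `R` containing no point of `E`. -/
def IsLargestEmptyDyadic {d : ℕ} (R : Cube d) (E : Set (EuclideanSpace ℝ (Fin d)))
    (M : Cube d) : Prop :=
  IsDyadicSubcube R M ∧ M.set ∩ E = ∅ ∧
    ∀ Q : Cube d, IsDyadicSubcube R Q → Q.set ∩ E = ∅ → Q.l ≤ M.l

/-- Weak porosity of `E ⊆ ℝ^d`. -/
def WeaklyPorous {d : ℕ} (E : Set (EuclideanSpace ℝ (Fin d))) : Prop :=
  ∃ c δ : ℝ, 0 < c ∧ c < 1 ∧ 0 < δ ∧ δ < 1 ∧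
    ∀ R : Cube d, ∃ M : Cube d, IsLargestEmptyDyadic R E M ∧
      ∃ F : Finset (Cube d),
        (↑F : Set (Cube d)).Pairwise (fun Q Q' => Disjoint Q.set Q'.set) ∧
        (∀ Q ∈ F, IsDyadicSubcube R Q ∧ Q.set ∩ E = ∅ ∧
          ENNReal.ofReal δ * volume M.set ≤ volume Q.set) ∧
        ENNReal.ofReal c * volume R.set ≤ ∑ Q ∈ F, volume Q.set

/-!
Let `S_j` be the total volume of the cubes of `𝒟_j(R)` that meet `E`, and `F_j` that of the cubes
of `𝒟_j(R) ∩ ℱ(R,E)`. A child of a cube meeting `E` either meets `E` or belongs to `ℱ(R,E)`, and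
the `2^d` children of a cube carry its volume, so `S_j = S_{j+1} + F_{j+1}`. The cubes counted in
`S_j` lie in `R` within distance `√d ℓ(R) 2^{-j}` of `E`, and these neighbourhoods shrink to
`R ∩ closure E`, a null set; hence `S_j → 0` and `S_j = ∑_{n > j} F_n`. Summing over `j` gives
`∑_j S_j = ∑_n n F_n`, which is the identity, as `log₂(ℓ(R)/ℓ(Q')) = n` for `Q' ∈ 𝒟_n(R)`.
-/

open scoped ENNReal
open Filter Topology

namespace ENNReal

theorem eq_tsum_ite_lt_of_eq_add {S F : ℕ → ℝ≥0∞} (hrec : ∀ j, S j = S (j + 1) + F (j + 1))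
    (hlim : Tendsto S atTop (𝓝 0)) (j : ℕ) :
    S j = ∑' n, if j < n then F n else 0 := by
  have hpartial : ∀ N,
      S j = ∑ n ∈ Finset.range (N + j + 1), (if j < n then F n else 0) + S (N + j) := by
    intro N
    induction N with
    | zero =>
      rw [Finset.sum_eq_zero fun n hn => if_neg (by simp at hn; omega), zero_add, zero_add]
    | succ N ih =>
      rw [ih, hrec (N + j), show N + 1 + j = N + j + 1 by omega,
        Finset.sum_range_succ _ (N + j + 1), if_pos (by omega)]
      ring
  have hsum : Tendsto (fun N => ∑ n ∈ Finset.range (N + j + 1), (if j < n then F n else 0)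
      + S (N + j)) atTop (𝓝 ((∑' n, if j < n then F n else 0) + 0)) :=
    ((ENNReal.tendsto_nat_tsum _).comp (tendsto_add_atTop_nat (j + 1))).add
      (hlim.comp (tendsto_add_atTop_nat j))
  simpa using tendsto_nhds_unique ((tendsto_const_nhds (x := S j)).congr hpartial) hsum

theorem tsum_eq_tsum_mul_of_eq_add {S F : ℕ → ℝ≥0∞} (hrec : ∀ j, S j = S (j + 1) + F (j + 1))
    (hlim : Tendsto S atTop (𝓝 0)) :
    ∑' j, S j = ∑' n, F n * n := by
  have hcount : ∀ n, ∑' j, (if j < n then F n else 0) = F n * n := fun n => by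
    rw [tsum_eq_sum (s := Finset.range n) fun j hj => if_neg (by simpa using hj),
      Finset.sum_ite_of_true fun j hj => by simpa using hj, Finset.sum_const, Finset.card_range,
      nsmul_eq_mul, mul_comm]
  simp_rw [eq_tsum_ite_lt_of_eq_add hrec hlim]
  rw [ENNReal.tsum_comm]
  exact tsum_congr hcount

end ENNReal

theorem div_two_pow_eq_two_mul_div_two_pow_succ {K : Type*} [Field K] [NeZero (2 : K)] (x : K)
    (j : ℕ) : x / 2 ^ j = 2 * (x / 2 ^ (j + 1)) := by
  rw [pow_succ]; field_simp

namespace Cube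

variable {d : ℕ}

theorem ext {Q Q' : Cube d} (ha : Q.a = Q'.a) (hl : Q.l = Q'.l) : Q = Q' := by
  cases Q; cases Q'; simp_all

theorem set_eq_preimage_pi (Q : Cube d) :
    Q.set = (MeasurableEquiv.toLp 2 (Fin d → ℝ)).symm ⁻¹'
      (Set.univ.pi fun i => Set.Ico (Q.a i) (Q.a i + Q.l)) := by
  ext x; simp [Cube.set, Set.mem_pi, MeasurableEquiv.toLp]; rfl

theorem measurableSet_set (Q : Cube d) : MeasurableSet Q.set := by
  rw [set_eq_preimage_pi]
  exact MeasurableEquiv.measurable _ (MeasurableSet.univ_pi fun _ => measurableSet_Ico)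

theorem volume_set (Q : Cube d) : volume Q.set = ENNReal.ofReal (Q.l ^ d) := by
  rw [set_eq_preimage_pi,
    (EuclideanSpace.volume_preserving_symm_measurableEquiv_toLp (Fin d)).measure_preimage
      (MeasurableSet.univ_pi fun _ => measurableSet_Ico).nullMeasurableSet, volume_pi_pi]
  simp [Real.volume_Ico, ENNReal.ofReal_pow Q.l_pos.le]

theorem dist_le_of_mem_set (Q : Cube d) {x y : EuclideanSpace ℝ (Fin d)} (hx : x ∈ Q.set)
    (hy : y ∈ Q.set) : dist x y ≤ √d * Q.l := by
  have hcoord : ∀ i, dist (x i) (y i) ^ 2 ≤ Q.l ^ 2 := fun i => by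
    obtain ⟨hx₁, hx₂⟩ : Q.a i ≤ x i ∧ x i < Q.a i + Q.l := hx i
    obtain ⟨hy₁, hy₂⟩ : Q.a i ≤ y i ∧ y i < Q.a i + Q.l := hy i
    rw [Real.dist_eq, sq_abs]
    exact sq_le_sq' (by linarith) (by linarith)
  calc dist x y = √(∑ i, dist (x i) (y i) ^ 2) := EuclideanSpace.dist_eq x y
    _ ≤ √(∑ _i : Fin d, Q.l ^ 2) := Real.sqrt_le_sqrt (Finset.sum_le_sum fun i _ => hcoord i)
    _ = √d * Q.l := by
      rw [Finset.sum_const, Finset.card_univ, Fintype.card_fin, nsmul_eq_mul,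
        Real.sqrt_mul (Nat.cast_nonneg d), Real.sqrt_sq Q.l_pos.le]

theorem set_nonempty (Q : Cube d) : Q.set.Nonempty :=
  ⟨WithLp.toLp 2 Q.a, fun _ => ⟨le_rfl, lt_add_of_pos_right _ Q.l_pos⟩⟩

theorem injective_div_two_pow (R : Cube d) : Function.Injective fun j : ℕ => R.l / 2 ^ j := by
  intro j j' h
  simp only [div_eq_mul_inv] at h
  exact pow_right_injective₀ two_pos (by norm_num) (inv_inj.1 ((mul_right_inj' R.l_pos.ne').1 h))

/-- The cube of `𝒟_j(R)` with multi-index `k`. -/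
noncomputable def dyadic (R : Cube d) (j : ℕ) (k : Fin d → Fin (2 ^ j)) : Cube d where
  a i := R.a i + k i * (R.l / 2 ^ j)
  l := R.l / 2 ^ j
  l_pos := div_pos R.l_pos (by positivity)

@[simp]
theorem dyadic_l (R : Cube d) (j : ℕ) (k : Fin d → Fin (2 ^ j)) :
    (R.dyadic j k).l = R.l / 2 ^ j := rfl

theorem isDyadicSubcube_iff (R Q : Cube d) :
    IsDyadicSubcube R Q ↔ ∃ j k, Q = R.dyadic j k := by
  constructor
  · rintro ⟨j, k, hk, hl, ha⟩
    exact ⟨j, fun i => ⟨k i, hk i⟩, Cube.ext (funext ha) hl⟩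
  · rintro ⟨j, k, rfl⟩
    exact ⟨j, fun i => k i, fun i => (k i).2, rfl, fun _ => rfl⟩

theorem isDyadicSubcube_dyadic (R : Cube d) (j : ℕ) (k : Fin d → Fin (2 ^ j)) :
    IsDyadicSubcube R (R.dyadic j k) :=
  (isDyadicSubcube_iff R _).2 ⟨j, k, rfl⟩

theorem dyadic_injective (R : Cube d) :
    Function.Injective fun p : Σ j, Fin d → Fin (2 ^ j) => R.dyadic p.1 p.2 := by
  rintro ⟨j, k⟩ ⟨j', k'⟩ h
  obtain rfl : j = j' := R.injective_div_two_pow (congrArg Cube.l h)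
  have hs : R.l / 2 ^ j ≠ 0 := (R.dyadic j k).l_pos.ne'
  obtain rfl : k = k' := funext fun i => Fin.ext <| by
    exact_mod_cast mul_right_cancel₀ hs (add_left_cancel (congrFun (congrArg Cube.a h) i))
  rfl

theorem mem_dyadic_set_iff (R : Cube d) (j : ℕ) (k : Fin d → Fin (2 ^ j))
    (x : EuclideanSpace ℝ (Fin d)) :
    x ∈ (R.dyadic j k).set ↔ ∀ i, ⌊(x i - R.a i) / (R.l / 2 ^ j)⌋ = ((k i : ℕ) : ℤ) := by
  have hs : 0 < R.l / 2 ^ j := (R.dyadic j k).l_pos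
  refine forall_congr' fun i => ?_
  rw [Int.floor_eq_iff, le_div_iff₀ hs, div_lt_iff₀ hs]
  push_cast
  change R.a i + _ ≤ x i ∧ x i < R.a i + _ + R.l / 2 ^ j ↔ _
  constructor <;> rintro ⟨h₁, h₂⟩ <;> constructor <;> linarith

theorem disjoint_dyadic_set (R : Cube d) (j : ℕ) {k k' : Fin d → Fin (2 ^ j)} (h : k ≠ k') :
    Disjoint (R.dyadic j k).set (R.dyadic j k').set := by
  refine Set.disjoint_left.2 fun x hx hx' => h (funext fun i => Fin.ext ?_)
  rw [mem_dyadic_set_iff] at hx hx'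
  exact_mod_cast (hx i).symm.trans (hx' i)

theorem dyadic_set_subset (R : Cube d) (j : ℕ) (k : Fin d → Fin (2 ^ j)) :
    (R.dyadic j k).set ⊆ R.set := by
  intro x hx i
  obtain ⟨h₁, h₂⟩ : R.a i + k i * (R.l / 2 ^ j) ≤ x i ∧
      x i < R.a i + k i * (R.l / 2 ^ j) + R.l / 2 ^ j := hx i
  have hs : 0 < R.l / 2 ^ j := (R.dyadic j k).l_pos
  have hk : ((k i : ℕ) : ℝ) + 1 ≤ 2 ^ j := by exact_mod_cast (k i).isLt
  have hfit : ((k i : ℕ) + 1) * (R.l / 2 ^ j) ≤ R.l := by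
    simpa [mul_div_cancel₀ R.l (pow_ne_zero j two_ne_zero)] using
      mul_le_mul_of_nonneg_right hk hs.le
  constructor <;> nlinarith

def parentIndex {j : ℕ} (k : Fin d → Fin (2 ^ (j + 1))) : Fin d → Fin (2 ^ j) :=
  fun i => ⟨k i / 2, Nat.div_lt_of_lt_mul (pow_succ' 2 j ▸ (k i).isLt)⟩

theorem dyadic_succ_subset_parent (R : Cube d) (j : ℕ) (k : Fin d → Fin (2 ^ (j + 1))) :
    (R.dyadic (j + 1) k).set ⊆ (R.dyadic j (parentIndex k)).set := by
  intro x hx i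
  set s := R.l / 2 ^ (j + 1) with hs_def
  have hs : 0 < s := (R.dyadic (j + 1) k).l_pos
  obtain ⟨h₁, h₂⟩ : R.a i + k i * s ≤ x i ∧ x i < R.a i + k i * s + s := hx i
  have hlo : ((k i / 2 : ℕ) : ℝ) * 2 ≤ k i := by exact_mod_cast Nat.div_mul_le_self _ 2
  have hhi : ((k i : ℕ) : ℝ) + 1 ≤ ((k i / 2 : ℕ) : ℝ) * 2 + 2 := by
    exact_mod_cast (by omega : (k i : ℕ) + 1 ≤ k i / 2 * 2 + 2)
  change R.a i + ((k i / 2 : ℕ) : ℝ) * (R.l / 2 ^ j) ≤ x i ∧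
    x i < R.a i + ((k i / 2 : ℕ) : ℝ) * (R.l / 2 ^ j) + R.l / 2 ^ j
  rw [div_two_pow_eq_two_mul_div_two_pow_succ]
  constructor <;> nlinarith [mul_le_mul_of_nonneg_right hlo hs.le,
    mul_le_mul_of_nonneg_right hhi hs.le]

def childIndexEquiv (j : ℕ) :
    (Fin d → Fin (2 ^ j)) × (Fin d → Fin 2) ≃ (Fin d → Fin (2 ^ (j + 1))) :=
  (Equiv.arrowProdEquivProdArrow _ _ _).symm.trans <|
    Equiv.piCongrRight fun _ => finProdFinEquiv.trans (finCongr (pow_succ 2 j).symm)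

@[simp]
theorem parentIndex_childIndexEquiv (j : ℕ) (p : (Fin d → Fin (2 ^ j)) × (Fin d → Fin 2)) :
    parentIndex (childIndexEquiv j p) = p.1 := by
  funext i
  ext
  simp [parentIndex, childIndexEquiv]
  omega

theorem sum_comp_parentIndex {M : Type*} [AddCommMonoid M] (j : ℕ) (g : (Fin d → Fin (2 ^ j)) → M) :
    ∑ k, g (parentIndex k) = 2 ^ d • ∑ k, g k := by
  rw [← (childIndexEquiv j).sum_comp, Fintype.sum_prod_type]
  simp [Finset.sum_const, Finset.smul_sum]

theorem ofReal_pow_div_two_pow (R : Cube d) (j : ℕ) :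
    ENNReal.ofReal ((R.l / 2 ^ j) ^ d) = 2 ^ d * ENNReal.ofReal ((R.l / 2 ^ (j + 1)) ^ d) := by
  rw [div_two_pow_eq_two_mul_div_two_pow_succ, mul_pow, ENNReal.ofReal_mul (by positivity),
    ENNReal.ofReal_pow zero_le_two, ENNReal.ofReal_ofNat]

open Classical in
theorem tsum_subtype_eq_tsum_dyadic (R : Cube d) {p : Cube d → Prop}
    (hp : ∀ Q, p Q → IsDyadicSubcube R Q) (f : Cube d → ℝ≥0∞) :
    ∑' Q : {Q // p Q}, f Q =
      ∑' j, ∑ k : Fin d → Fin (2 ^ j), if p (R.dyadic j k) then f (R.dyadic j k) else 0 := by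
  have hsupp : Function.support ({Q | p Q}.indicator f) ⊆
      Set.range fun q : Σ j, Fin d → Fin (2 ^ j) => R.dyadic q.1 q.2 := by
    intro Q hQ
    obtain ⟨j, k, rfl⟩ := (isDyadicSubcube_iff R Q).1 (hp Q (Set.mem_of_indicator_ne_zero hQ))
    exact ⟨⟨j, k⟩, rfl⟩
  rw [show ∑' Q : {Q // p Q}, f Q = _ from tsum_subtype {Q | p Q} f,
    ← (dyadic_injective R).tsum_eq hsupp, ENNReal.tsum_sigma']
  simp only [tsum_fintype, Set.indicator_apply, Set.mem_ofPred_eq]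

theorem isMaxEmpty_dyadic_succ_iff (R : Cube d) (E : Set (EuclideanSpace ℝ (Fin d))) (j : ℕ)
    (k : Fin d → Fin (2 ^ (j + 1))) :
    IsMaxEmpty R E (R.dyadic (j + 1) k) ↔
      (R.dyadic (j + 1) k).set ∩ E = ∅ ∧ ((R.dyadic j (parentIndex k)).set ∩ E).Nonempty := by
  refine ⟨fun ⟨_, hempty, P, hP, hPl, hsub, hPE⟩ => ⟨hempty, ?_⟩,
    fun ⟨hempty, hparent⟩ => ⟨isDyadicSubcube_dyadic R _ _, hempty, _,
      isDyadicSubcube_dyadic R j _, ?_, dyadic_succ_subset_parent R j k, hparent⟩⟩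
  · obtain ⟨m, k', rfl⟩ := (isDyadicSubcube_iff R P).1 hP
    obtain rfl : m = j := R.injective_div_two_pow <| by
      simpa [div_two_pow_eq_two_mul_div_two_pow_succ R.l j] using hPl
    obtain ⟨x, hx⟩ := (R.dyadic (m + 1) k).set_nonempty
    obtain rfl : k' = parentIndex k := by
      by_contra hne
      exact Set.disjoint_left.1 (disjoint_dyadic_set R m hne) (hsub hx)
        (dyadic_succ_subset_parent R m k hx)
    exact hPE
  · exact div_two_pow_eq_two_mul_div_two_pow_succ R.l j

open Classical in
noncomputable def dyadicLevelVolume (R : Cube d) (p : Cube d → Prop) (j : ℕ) : ℝ≥0∞ :=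
  ∑ k : Fin d → Fin (2 ^ j), if p (R.dyadic j k) then volume (R.dyadic j k).set else 0

def MeetsSet (E : Set (EuclideanSpace ℝ (Fin d))) (Q : Cube d) : Prop :=
  (Q.set ∩ E).Nonempty

theorem dyadicLevelVolume_meetsSet_eq_add (R : Cube d) (E : Set (EuclideanSpace ℝ (Fin d)))
    (j : ℕ) :
    R.dyadicLevelVolume (MeetsSet E) j =
      R.dyadicLevelVolume (MeetsSet E) (j + 1) + R.dyadicLevelVolume (IsMaxEmpty R E) (j + 1) := by
  classical
  have hchild : ∀ k : Fin d → Fin (2 ^ (j + 1)),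
      ((if MeetsSet E (R.dyadic (j + 1) k) then volume (R.dyadic (j + 1) k).set else 0) +
        if IsMaxEmpty R E (R.dyadic (j + 1) k) then volume (R.dyadic (j + 1) k).set else 0) =
      if MeetsSet E (R.dyadic j (parentIndex k)) then
        ENNReal.ofReal ((R.l / 2 ^ (j + 1)) ^ d) else 0 := by
    intro k
    have hup : MeetsSet E (R.dyadic (j + 1) k) → MeetsSet E (R.dyadic j (parentIndex k)) :=
      fun ⟨x, hx, hxE⟩ => ⟨x, dyadic_succ_subset_parent R j k hx, hxE⟩
    have hmax := isMaxEmpty_dyadic_succ_iff R E j k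
    rw [← Set.not_nonempty_iff_eq_empty] at hmax
    unfold MeetsSet at hup ⊢
    rw [volume_set, dyadic_l]
    by_cases hc : ((R.dyadic (j + 1) k).set ∩ E).Nonempty <;>
      by_cases hp : ((R.dyadic j (parentIndex k)).set ∩ E).Nonempty <;>
      simp_all
  rw [dyadicLevelVolume, dyadicLevelVolume, dyadicLevelVolume, ← Finset.sum_add_distrib,
    Finset.sum_congr rfl fun k _ => hchild k,
    sum_comp_parentIndex j fun k =>
      if MeetsSet E (R.dyadic j k) then ENNReal.ofReal ((R.l / 2 ^ (j + 1)) ^ d) else 0,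
    nsmul_eq_mul, Finset.mul_sum]
  refine Finset.sum_congr rfl fun k _ => ?_
  rw [volume_set, dyadic_l, ofReal_pow_div_two_pow R j, mul_ite, mul_zero]
  norm_cast

open Classical in
theorem dyadicLevelVolume_eq_volume_biUnion (R : Cube d) (p : Cube d → Prop) (j : ℕ) :
    R.dyadicLevelVolume p j =
      volume (⋃ k ∈ Finset.univ.filter fun k => p (R.dyadic j k), (R.dyadic j k).set) := by
  rw [measure_biUnion_finset (fun k _ k' _ hne => disjoint_dyadic_set R j hne)
    (fun k _ => (R.dyadic j k).measurableSet_set), Finset.sum_filter, dyadicLevelVolume]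

theorem dyadicLevelVolume_meetsSet_le (R : Cube d) (E : Set (EuclideanSpace ℝ (Fin d))) (j : ℕ) :
    R.dyadicLevelVolume (MeetsSet E) j ≤
      volume.restrict R.set (Metric.cthickening (√d * (R.l / 2 ^ j)) E) := by
  classical
  rw [dyadicLevelVolume_eq_volume_biUnion, Measure.restrict_apply' R.measurableSet_set]
  refine measure_mono fun x hx => ?_
  simp only [Finset.mem_filter, Finset.mem_univ, true_and, Set.mem_iUnion] at hx
  obtain ⟨k, ⟨y, hy, hyE⟩, hx⟩ := hx
  exact ⟨Metric.mem_cthickening_of_dist_le x y _ E hyE ((R.dyadic j k).dist_le_of_mem_set hx hy),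
    dyadic_set_subset R j k hx⟩

theorem tendsto_dyadicLevelVolume_meetsSet (R : Cube d) {E : Set (EuclideanSpace ℝ (Fin d))}
    (hE0 : volume (closure E) = 0) :
    Tendsto (R.dyadicLevelVolume (MeetsSet E)) atTop (𝓝 0) := by
  have hthick : Tendsto (fun r => volume.restrict R.set (Metric.cthickening r E)) (𝓝 0) (𝓝 0) := by
    have hfin : volume.restrict R.set (Metric.cthickening 1 E) ≠ ∞ :=
      ((measure_mono (Set.subset_univ _)).trans_lt (by simp [volume_set])).ne
    have hnull : volume.restrict R.set (closure E) = 0 :=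
      nonpos_iff_eq_zero.1 ((Measure.restrict_le_self _).trans_eq hE0)
    simpa [hnull] using tendsto_measure_cthickening ⟨1, one_pos, hfin⟩
  have hradius : Tendsto (fun j : ℕ => √d * (R.l / 2 ^ j)) atTop (𝓝 0) := by
    simpa [div_eq_mul_inv, ← inv_pow, mul_assoc] using
      (tendsto_pow_atTop_nhds_zero_of_lt_one (by norm_num : (0 : ℝ) ≤ 2⁻¹)
        (by norm_num)).const_mul (√d * R.l)
  exact tendsto_of_tendsto_of_tendsto_of_le_of_le tendsto_const_nhds (hthick.comp hradius)
    (fun _ => zero_le) (dyadicLevelVolume_meetsSet_le R E)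

end Cube

theorem stmt0_general {d : ℕ} (E : Set (EuclideanSpace ℝ (Fin d)))
    (hE0 : volume (closure E) = 0) (R : Cube d) :
    ∑' Q : {Q : Cube d // IsDyadicSubcube R Q ∧ (Q.set ∩ E).Nonempty}, volume Q.1.set
      = ∑' Q' : {Q' : Cube d // IsMaxEmpty R E Q'},
          volume Q'.1.set * ENNReal.ofReal (Real.logb 2 (R.l / Q'.1.l)) := by
  have hlhs : ∑' Q : {Q : Cube d // IsDyadicSubcube R Q ∧ (Q.set ∩ E).Nonempty}, volume Q.1.set
      = ∑' j, R.dyadicLevelVolume (Cube.MeetsSet E) j := by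
    rw [R.tsum_subtype_eq_tsum_dyadic (p := fun Q => IsDyadicSubcube R Q ∧ (Q.set ∩ E).Nonempty)
      (fun _ hQ => hQ.1) fun Q => volume Q.set]
    refine tsum_congr fun j => Finset.sum_congr rfl fun k _ => ?_
    by_cases hk : ((R.dyadic j k).set ∩ E).Nonempty <;>
      simp [hk, R.isDyadicSubcube_dyadic, Cube.MeetsSet]
  have hrhs : ∑' Q' : {Q' : Cube d // IsMaxEmpty R E Q'},
      volume Q'.1.set * ENNReal.ofReal (Real.logb 2 (R.l / Q'.1.l))
      = ∑' j, R.dyadicLevelVolume (IsMaxEmpty R E) j * j := by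
    rw [R.tsum_subtype_eq_tsum_dyadic (fun _ hQ => hQ.1)
      fun Q => volume Q.set * ENNReal.ofReal (Real.logb 2 (R.l / Q.l))]
    refine tsum_congr fun j => ?_
    have hlog : Real.logb 2 (R.l / (R.l / 2 ^ j)) = j := by
      rw [div_div_cancel₀ R.l_pos.ne', Real.logb_pow, Real.logb_self_eq_one one_lt_two, mul_one]
    simp [Cube.dyadicLevelVolume, hlog, Finset.sum_mul, ite_mul]
  rw [hlhs, hrhs]
  exact ENNReal.tsum_eq_tsum_mul_of_eq_add (R.dyadicLevelVolume_meetsSet_eq_add E)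
    (R.tendsto_dyadicLevelVolume_meetsSet hE0)

/-- ∑_{Q ∈ 𝒟(R,E)} |Q| = ∑_{Q' ∈ ℱ(R,E)} |Q'| log₂(ℓ(R)/ℓ(Q')). -/
theorem stmt0 {d : ℕ} (E : Set (EuclideanSpace ℝ (Fin d))) (hE : E.Nonempty)
    (hE0 : volume (closure E) = 0) (R : Cube d) :
    ∑' Q : {Q : Cube d // IsDyadicSubcube R Q ∧ (Q.set ∩ E).Nonempty}, volume Q.1.set
      = ∑' Q' : {Q' : Cube d // IsMaxEmpty R E Q'},
          volume Q'.1.set * ENNReal.ofReal (Real.logb 2 (R.l / Q'.1.l)) :=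
  stmt0_general E hE0 R
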